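/- Let f be a finite Blaschke product with f(0) = 0 which is not a rotation. Then there exists a constant c > 0, depending only on f, such that for all positive integers M < N, every finite sequence of complex numbers (a_n)_{n=M}^N, and every arc I ⊆ ∂𝔻 with m(f^N(I)) ≤ δ for some δ < 1, one has |Σ_{k=M}^N a_k (f^k(ξ) − f^k(ξ'))| ≤ c δ (Σ_{n=M}^N |a_n|²)^{1/2} for all ξ, ξ' ∈ I. -/

import Mathlib

open MeasureTheory Filter
open scoped Classical ENNReal Topology

noncomputable section

/-- The unit circle `∂𝔻 ⊆ ℂ`. -/
def uc : Set ℂ := {z : ℂ | ‖z‖ = 1}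

/-- Parametrization of the unit circle by normalised arclength. -/
def pc (t : ℝ) : ℂ := Complex.exp (2 * Real.pi * Complex.I * t)

/-- Normalised arclength measure on the unit circle, as a measure on `ℂ`. -/
def μc : Measure ℂ := Measure.map pc (volume.restrict (Set.Ico (0:ℝ) 1))

/-- Normalised length of a subset of the circle. -/
def mA (S : Set ℂ) : ℝ := (μc S).toReal

/-- Closed arc centered at `ξ` (a point of the circle) with normalised length `ℓ`
(the whole circle if `ℓ ≥ 1`). -/
def carc (ξ : ℂ) (ℓ : ℝ) : Set ℂ :=
  if 1 ≤ ℓ then uc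
  else pc '' Set.Icc (Complex.arg ξ / (2 * Real.pi) - ℓ / 2)
                     (Complex.arg ξ / (2 * Real.pi) + ℓ / 2)

/-- A (nondegenerate or degenerate) closed arc of the circle. -/
def IsClosedArc (I : Set ℂ) : Prop := ∃ ξ ∈ uc, ∃ ℓ : ℝ, 0 ≤ ℓ ∧ I = carc ξ ℓ

/-- The arc `I(z)`: centered at `z/|z|` with normalised length `1 - |z|`. -/
def Iarc (z : ℂ) : Set ℂ := if z = 0 then uc else carc (z / ‖z‖) (1 - ‖z‖)

/-- The arc `dI(z)`: concentric to `I(z)`, of length `min (d(1-|z|)) 1`. -/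
def dIarc (d : ℕ) (z : ℂ) : Set ℂ := if z = 0 then uc else carc (z / ‖z‖) (d * (1 - ‖z‖))

/-- Finite Blaschke product fixing the origin. -/
def IsFBP (f : ℂ → ℂ) : Prop :=
  ∃ (α : ℂ) (m J : ℕ) (zs : Fin J → ℂ),
    ‖α‖ = 1 ∧ 1 ≤ m ∧ (∀ j, ‖zs j‖ < 1) ∧
    ∀ w : ℂ, f w = α * w ^ m * ∏ j, (w - zs j) / (1 - (starRingEnd ℂ) (zs j) * w)

/-- Finite Blaschke product fixing the origin which is not a rotation (degree ≥ 2). -/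
def IsFBPN (f : ℂ → ℂ) : Prop :=
  ∃ (α : ℂ) (m J : ℕ) (zs : Fin J → ℂ),
    ‖α‖ = 1 ∧ 1 ≤ m ∧ 2 ≤ m + J ∧ (∀ j, ‖zs j‖ < 1) ∧
    ∀ w : ℂ, f w = α * w ^ m * ∏ j, (w - zs j) / (1 - (starRingEnd ℂ) (zs j) * w)

/-- Measure function: vanishing at `0`, strictly increasing, right-continuous. -/
def IsMeasureFunction (φ : ℝ → ℝ) : Prop :=
  φ 0 = 0 ∧ StrictMonoOn φ (Set.Ici 0) ∧
    ∀ t ∈ Set.Ici (0:ℝ), ContinuousWithinAt φ (Set.Ici t) t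

/-- `φ`-Hausdorff measure on the circle, via countable covers by arcs. -/
def Hmeas (φ : ℝ → ℝ) (E : Set ℂ) : ℝ≥0∞ :=
  ⨆ (δ : ℝ) (_ : 0 < δ),
    ⨅ (ξ : ℕ → ℂ) (ℓ : ℕ → ℝ) (_ : ∀ n, 0 ≤ ℓ n ∧ ℓ n < δ)
      (_ : E ⊆ ⋃ n, carc (ξ n) (ℓ n)),
      ∑' n, ENNReal.ofReal (φ (ℓ n))

/-- `min {|f'(ξ)| : ξ ∈ ∂𝔻}`. -/
def C0min (f : ℂ → ℂ) : ℝ := sInf ((fun ξ => ‖deriv f ξ‖) '' uc)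

/-- Generalised inverse of `ψ(t) = φ(t)/t`: `ψ⁻¹(t) = inf {s > 0 : ψ(s) > t}`. -/
def psiInv (φ : ℝ → ℝ) (t : ℝ) : ℝ := sInf {s : ℝ | 0 < s ∧ t < φ s / s}

/-- The set `A(w)` of boundary points where `∑ aₙ fⁿ` converges to `w`. -/
def Aset (f : ℂ → ℂ) (a : ℕ → ℂ) (w : ℂ) : Set ℂ :=
  {ξ : ℂ | ξ ∈ uc ∧
    Tendsto (fun L => ∑ n ∈ Finset.Icc 1 L, a n * (f^[n] ξ)) atTop (𝓝 w)}



/-! ### Auxiliary lemmas -/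

lemma pc_mem_uc (t : ℝ) : pc t ∈ uc := by
  simp only [uc, pc, Set.mem_setOf_eq, Complex.norm_exp]
  norm_num [Complex.mul_re]

lemma pc_ne_zero (t : ℝ) : pc t ≠ 0 := Complex.exp_ne_zero _

lemma hasDerivAt_pc (t : ℝ) :
    HasDerivAt pc (2 * Real.pi * Complex.I * pc t) t := by
  have h1 : HasDerivAt (fun t : ℝ => (2 * Real.pi * Complex.I) * (t:ℂ))
      (2 * Real.pi * Complex.I) t := by
    simpa using (Complex.ofRealCLM.hasDerivAt (x := t)).const_mul (2 * Real.pi * Complex.I)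
  have h2 := (Complex.hasDerivAt_exp _).comp t h1
  have : pc = Complex.exp ∘ fun t : ℝ => 2 * Real.pi * Complex.I * (t:ℂ) := rfl
  rw [this]
  refine h2.congr_deriv ?_
  simp only [Function.comp]; ring

lemma pc_eq_iff {x y : ℝ} : pc x = pc y ↔ ∃ n : ℤ, x = y + n := by
  rw [pc, pc, Complex.exp_eq_exp_iff_exists_int]
  constructor
  · rintro ⟨n, hn⟩
    refine ⟨n, ?_⟩
    have h3 : (x:ℂ) = ((y + n : ℝ) : ℂ) := by
      have hπ : (Real.pi:ℂ) ≠ 0 := by exact_mod_cast Real.pi_ne_zero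
      have hI := Complex.I_ne_zero
      push_cast at hn ⊢
      have h2 : (2 * (Real.pi:ℂ) * Complex.I) ≠ 0 := by
        simp [hπ, Complex.I_ne_zero]
      refine mul_left_cancel₀ h2 ?_
      rw [hn]; ring
    exact_mod_cast h3
  · rintro ⟨n, hn⟩
    exact ⟨n, by rw [hn]; push_cast; ring⟩

lemma pc_arg {ξ : ℂ} (hξ : ξ ∈ uc) : pc (Complex.arg ξ / (2 * Real.pi)) = ξ := by
  have h2π : (2 * Real.pi) ≠ 0 := by positivity
  have : pc (Complex.arg ξ / (2 * Real.pi)) = Complex.exp (Complex.arg ξ * Complex.I) := by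
    rw [pc]; congr 1; push_cast
    have hπ : (Real.pi:ℂ) ≠ 0 := by exact_mod_cast Real.pi_ne_zero
    field_simp
  rw [this]
  have := Complex.norm_mul_exp_arg_mul_I ξ
  have habs : ‖ξ‖ = 1 := hξ
  rw [habs] at this; simpa using this

lemma pc_lip (x y : ℝ) : ‖pc x - pc y‖ ≤ 2 * Real.pi * ‖x - y‖ := by
  have := Convex.norm_image_sub_le_of_norm_hasDerivWithin_le
    (f := pc) (C := 2 * Real.pi) (s := (Set.univ : Set ℝ))
    (fun t _ => (hasDerivAt_pc t).hasDerivWithinAt)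
    (fun t _ => by
      have habs : ‖pc t‖ = 1 := pc_mem_uc t
      simp only [norm_mul, habs, Complex.norm_I, Complex.norm_real,
        Complex.norm_two]
      rw [Real.norm_of_nonneg Real.pi_pos.le]; ring_nf; rfl)
    convex_univ (Set.mem_univ y) (Set.mem_univ x)
  simpa using this

lemma continuous_pc : Continuous pc := by
  unfold pc; fun_prop

lemma measurable_pc : Measurable pc := continuous_pc.measurable

lemma measurableSet_uc : MeasurableSet uc := by
  have : uc = Metric.sphere (0:ℂ) 1 := by
    ext z; simp [uc, Metric.mem_sphere, dist_eq_norm]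
  rw [this]; exact Metric.isClosed_sphere.measurableSet

lemma μc_apply {S : Set ℂ} (hS : MeasurableSet S) :
    μc S = volume (pc ⁻¹' S ∩ Set.Ico (0:ℝ) 1) := by
  rw [μc, Measure.map_apply measurable_pc hS,
    Measure.restrict_apply (measurable_pc hS)]

lemma mA_uc : mA uc = 1 := by
  have h1 : pc ⁻¹' uc = Set.univ := Set.eq_univ_of_forall fun t => pc_mem_uc t
  rw [mA, μc_apply measurableSet_uc, h1]
  simp

lemma pc_surjOn : ∀ ζ ∈ uc, ∀ u : ℝ, ∃ s ∈ Set.Ico u (u+1), pc s = ζ := by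
  intro ζ hζ u
  set s₀ := Complex.arg ζ / (2 * Real.pi) with hs₀
  refine ⟨u + Int.fract (s₀ - u), ⟨by linarith [Int.fract_nonneg (s₀ - u)],
    by linarith [Int.fract_lt_one (s₀ - u)]⟩, ?_⟩
  rw [← pc_arg hζ, ← hs₀]
  rw [pc_eq_iff]
  exact ⟨-⌊s₀ - u⌋, by rw [Int.fract]; push_cast; ring⟩

lemma pc_image_Icc_full {u v : ℝ} (h : u + 1 ≤ v) : pc '' Set.Icc u v = uc := by
  apply Set.Subset.antisymm
  · rintro _ ⟨s, _, rfl⟩; exact pc_mem_uc s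
  · intro ζ hζ
    obtain ⟨s, hs, hsζ⟩ := pc_surjOn ζ hζ u
    exact ⟨s, ⟨hs.1, le_trans (le_of_lt hs.2) h⟩, hsζ⟩

lemma preimage_pc_image_Icc (u v : ℝ) :
    pc ⁻¹' (pc '' Set.Icc u v) = ⋃ n : ℤ, Set.Icc (u + n) (v + n) := by
  ext x
  simp only [Set.mem_preimage, Set.mem_image, Set.mem_iUnion, Set.mem_Icc]
  constructor
  · rintro ⟨s, ⟨hs1, hs2⟩, hsx⟩
    obtain ⟨n, hn⟩ := pc_eq_iff.mp hsx
    refine ⟨-n, ?_, ?_⟩ <;> push_cast <;> linarith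
  · rintro ⟨n, hn1, hn2⟩
    refine ⟨x - n, ⟨by linarith, by linarith⟩, ?_⟩
    rw [pc_eq_iff]; exact ⟨-n, by push_cast; ring⟩

lemma mA_pc_image_Icc {u v : ℝ} (h0 : u ≤ v) (h1 : v - u < 1) :
    mA (pc '' Set.Icc u v) = v - u := by
  set W : Set ℝ := ⋃ n : ℤ, Set.Icc (u + n) (v + n) with hW
  have hWmeas : MeasurableSet W := MeasurableSet.iUnion fun n => measurableSet_Icc
  have hSmeas : MeasurableSet (pc '' Set.Icc u v) :=
    (isCompact_Icc.image continuous_pc).measurableSet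
  have hWper : ∀ x : ℝ, x + 1 ∈ W ↔ x ∈ W := by
    intro x
    simp only [hW, Set.mem_iUnion, Set.mem_Icc]
    constructor
    · rintro ⟨n, h1', h2'⟩; exact ⟨n - 1, by push_cast; constructor <;> linarith⟩
    · rintro ⟨n, h1', h2'⟩; exact ⟨n + 1, by push_cast; constructor <;> linarith⟩
  set g : ℝ → ℝ := W.indicator (fun _ => (1:ℝ)) with hg
  have hgper : Function.Periodic g 1 := by
    intro x
    simp only [hg, Set.indicator_apply]
    by_cases hx : x ∈ W
    · rw [if_pos ((hWper x).mpr hx), if_pos hx]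
    · rw [if_neg (fun h => hx ((hWper x).mp h)), if_neg hx]
  have key : ∀ a : ℝ, ∫ x in a..(a+1), g x = (volume (W ∩ Set.Ioc a (a+1))).toReal := by
    intro a
    rw [intervalIntegral.integral_of_le (by linarith : a ≤ a + 1)]
    rw [hg, MeasureTheory.integral_indicator hWmeas]
    rw [MeasureTheory.setIntegral_const]
    rw [measureReal_restrict_apply hWmeas]
    simp [smul_eq_mul, measureReal_def]
  have hper_int : (volume (W ∩ Set.Ioc 0 1)).toReal
      = (volume (W ∩ Set.Ioc u (u+1))).toReal := by
    have := hgper.intervalIntegral_add_eq 0 u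
    rw [key 0, key u] at this
    simpa using this
  have hsub1 : Set.Ioc u v ⊆ W ∩ Set.Ioc u (u+1) := by
    intro x hx
    refine ⟨Set.mem_iUnion.mpr ⟨0, by push_cast; simp [Set.mem_Icc]; exact ⟨le_of_lt hx.1, hx.2⟩⟩, hx.1, by linarith [hx.2]⟩
  have hsub2 : W ∩ Set.Ioc u (u+1) ⊆ Set.Ioc u v ∪ {u + 1} := by
    rintro x ⟨hxW, hx1, hx2⟩
    have hxW' := Set.mem_iUnion.mp hxW
    obtain ⟨n, hn⟩ := hxW'
    rw [Set.mem_Icc] at hn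
    obtain ⟨hn1, hn2⟩ := hn
    rcases lt_trichotomy n 0 with hneg | hzero | hpos
    · exfalso
      have hn' : n ≤ -1 := by omega
      have : (n:ℝ) ≤ -1 := by exact_mod_cast hn'
      linarith
    · subst hzero
      simp only [Int.cast_zero, add_zero] at hn1 hn2
      exact Or.inl ⟨hx1, hn2⟩
    · have : (1:ℝ) ≤ (n:ℝ) := by exact_mod_cast hpos
      right
      have hxe : x = u + 1 := le_antisymm hx2 (by linarith)
      simp [hxe]
  have hvol : volume (W ∩ Set.Ioc u (u+1)) = ENNReal.ofReal (v - u) := by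
    apply le_antisymm
    · calc volume (W ∩ Set.Ioc u (u+1)) ≤ volume (Set.Ioc u v ∪ {u+1}) :=
            measure_mono hsub2
        _ ≤ volume (Set.Ioc u v) + volume ({u+1} : Set ℝ) := measure_union_le _ _
        _ = ENNReal.ofReal (v - u) := by simp [Real.volume_Ioc]
    · calc ENNReal.ofReal (v - u) = volume (Set.Ioc u v) := by simp [Real.volume_Ioc]
        _ ≤ volume (W ∩ Set.Ioc u (u+1)) := measure_mono hsub1
  have hends : volume (W ∩ Set.Ico (0:ℝ) 1) = volume (W ∩ Set.Ioc (0:ℝ) 1) := by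
    apply le_antisymm
    · calc volume (W ∩ Set.Ico (0:ℝ) 1) ≤ volume ((W ∩ Set.Ioc (0:ℝ) 1) ∪ {0}) := by
            apply measure_mono
            rintro x ⟨hxW, hx0, hx1⟩
            rcases eq_or_lt_of_le hx0 with h | h
            · exact Or.inr (by simp [← h])
            · exact Or.inl ⟨hxW, h, le_of_lt hx1⟩
        _ ≤ volume (W ∩ Set.Ioc (0:ℝ) 1) + volume ({0} : Set ℝ) := measure_union_le _ _
        _ = volume (W ∩ Set.Ioc (0:ℝ) 1) := by simp
    · calc volume (W ∩ Set.Ioc (0:ℝ) 1) ≤ volume ((W ∩ Set.Ico (0:ℝ) 1) ∪ {1}) := by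
            apply measure_mono
            rintro x ⟨hxW, hx0, hx1⟩
            rcases eq_or_lt_of_le hx1 with h | h
            · exact Or.inr (by simp [h])
            · exact Or.inl ⟨hxW, le_of_lt hx0, h⟩
        _ ≤ volume (W ∩ Set.Ico (0:ℝ) 1) + volume ({1} : Set ℝ) := measure_union_le _ _
        _ = volume (W ∩ Set.Ico (0:ℝ) 1) := by simp
  have hμ : μc (pc '' Set.Icc u v) = volume (W ∩ Set.Ico (0:ℝ) 1) := by
    rw [μc_apply hSmeas, preimage_pc_image_Icc, ← hW]
  rw [mA, hμ, hends, hper_int, hvol, ENNReal.toReal_ofReal (by linarith)]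

/-! ### Blaschke factor lemmas -/

/-- Blaschke factor. -/
def qf (a z : ℂ) : ℂ := (z - a) / (1 - (starRingEnd ℂ) a * z)

/-- The "expansion factor" on the circle. -/
def Dfun (m : ℕ) {J : ℕ} (zs : Fin J → ℂ) (w : ℂ) : ℝ :=
  m + ∑ j, (1 - Complex.normSq (zs j)) / Complex.normSq (w - zs j)

lemma den_eq {a z : ℂ} (hz : ‖z‖ = 1) :
    1 - (starRingEnd ℂ) a * z = z * (starRingEnd ℂ) (z - a) := by
  have h1 : z * (starRingEnd ℂ) z = Complex.normSq z := Complex.mul_conj z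
  have h2 : Complex.normSq z = 1 := by
    rw [Complex.normSq_eq_norm_sq, hz]; norm_num
  rw [map_sub, mul_sub, h1, h2]; push_cast; ring

lemma z_ne_a {a z : ℂ} (hz : ‖z‖ = 1) (ha : ‖a‖ < 1) : z - a ≠ 0 := by
  intro h
  rw [sub_eq_zero] at h
  rw [h] at hz; linarith [hz ▸ ha]

lemma den_ne {a z : ℂ} (hz : ‖z‖ = 1) (ha : ‖a‖ < 1) :
    1 - (starRingEnd ℂ) a * z ≠ 0 := by
  rw [den_eq hz]
  refine mul_ne_zero ?_ ?_
  · intro h; rw [h] at hz; simp at hz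
  · rw [ne_eq, map_eq_zero]; exact z_ne_a hz ha

lemma qf_norm {a z : ℂ} (hz : ‖z‖ = 1) (ha : ‖a‖ < 1) : ‖qf a z‖ = 1 := by
  rw [qf, norm_div, den_eq hz, norm_mul, hz, RCLike.norm_conj, one_mul]
  exact div_self (norm_ne_zero_iff.mpr (z_ne_a hz ha))

lemma qf_ne_zero {a z : ℂ} (hz : ‖z‖ = 1) (ha : ‖a‖ < 1) : qf a z ≠ 0 := by
  intro h
  have := qf_norm hz ha
  rw [h] at this; simp at this

lemma hasDerivAt_qf {a z : ℂ} (hz : ‖z‖ = 1) (ha : ‖a‖ < 1) :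
    HasDerivAt (qf a) ((1 - Complex.normSq a) / (1 - (starRingEnd ℂ) a * z)^2) z := by
  have h1 : HasDerivAt (fun w : ℂ => w - a) 1 z := (hasDerivAt_id z).sub_const a
  have h2 : HasDerivAt (fun w : ℂ => 1 - (starRingEnd ℂ) a * w) (-((starRingEnd ℂ) a)) z := by
    simpa using ((hasDerivAt_id z).const_mul ((starRingEnd ℂ) a)).const_sub 1
  have := h1.div h2 (den_ne hz ha)
  refine this.congr_deriv ?_
  have hd := den_ne hz ha
  rw [← Complex.mul_conj a]
  ring

lemma z_mul_deriv_qf {a z : ℂ} (hz : ‖z‖ = 1) (ha : ‖a‖ < 1) :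
    z * ((1 - Complex.normSq a) / (1 - (starRingEnd ℂ) a * z)^2)
      = qf a z * (((1 - Complex.normSq a) / Complex.normSq (z - a) : ℝ) : ℂ) := by
  have hd := den_ne hz ha
  have hza := z_ne_a hz ha
  have hnsq : (Complex.normSq (z - a) : ℂ) = (z - a) * (starRingEnd ℂ) (z - a) :=
    (Complex.mul_conj (z - a)).symm
  have hnsq_ne : (Complex.normSq (z - a) : ℂ) ≠ 0 := by
    simpa [Complex.normSq_eq_zero] using hza
  have hzne : z ≠ 0 := by intro h; rw [h] at hz; simp at hz
  have hcne : (starRingEnd ℂ) (z - a) ≠ 0 := by rw [ne_eq, map_eq_zero]; exact hza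
  rw [qf, den_eq hz]
  push_cast
  rw [hnsq]
  generalize hc : (starRingEnd ℂ) (z - a) = c at hcne ⊢
  field_simp

lemma hasDerivAt_blaschke {α : ℂ} {m J : ℕ} {zs : Fin J → ℂ} (hm : 1 ≤ m)
    (hzs : ∀ j, ‖zs j‖ < 1) {w : ℂ} (hw : ‖w‖ = 1) :
    HasDerivAt (fun z => α * z ^ m * ∏ j, qf (zs j) z)
      ((α * w ^ m * ∏ j, qf (zs j) w) * ((Dfun m zs w : ℝ) : ℂ) / w) w := by
  classical
  have hwne : w ≠ 0 := by intro h; rw [h] at hw; simp at hw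
  set P : ℂ := ∏ j, qf (zs j) w with hP
  set d : Fin J → ℂ := fun j => (1 - Complex.normSq (zs j)) / (1 - (starRingEnd ℂ) (zs j) * w)^2 with hd
  set r : Fin J → ℝ := fun j => (1 - Complex.normSq (zs j)) / Complex.normSq (w - zs j) with hr
  have hpow : HasDerivAt (fun z : ℂ => z ^ m) ((m : ℂ) * w ^ (m - 1)) w := hasDerivAt_pow m w
  have hprod : HasDerivAt (fun z => ∏ j, qf (zs j) z)
      (∑ j, (∏ i ∈ Finset.univ.erase j, qf (zs i) w) • d j) w :=
    HasDerivAt.fun_finsetProd (fun j _ => hasDerivAt_qf hw (hzs j))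
  set S : ℂ := ∑ j, (∏ i ∈ Finset.univ.erase j, qf (zs i) w) • d j with hS
  have hmul := (hpow.mul hprod).const_mul α
  simp only [Pi.mul_apply, ← mul_assoc] at hmul
  refine hmul.congr_deriv ?_
  symm
  have hwS : w * S = P * ((∑ j, r j : ℝ) : ℂ) := by
    rw [hS, Finset.mul_sum]
    push_cast
    rw [Finset.mul_sum]
    refine Finset.sum_congr rfl fun j _ => ?_
    have hPe : (∏ i ∈ Finset.univ.erase j, qf (zs i) w) * qf (zs j) w = P :=
      Finset.prod_erase_mul _ _ (Finset.mem_univ j)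
    have hkey := z_mul_deriv_qf hw (hzs j)
    rw [smul_eq_mul]
    calc w * ((∏ i ∈ Finset.univ.erase j, qf (zs i) w) * d j)
        = (∏ i ∈ Finset.univ.erase j, qf (zs i) w) * (w * d j) := by ring
      _ = (∏ i ∈ Finset.univ.erase j, qf (zs i) w) * (qf (zs j) w * ((r j : ℝ) : ℂ)) := by
          rw [hr]; rw [hkey]
      _ = P * ((r j : ℝ) : ℂ) := by rw [← hPe]; ring
  have hD : ((Dfun m zs w : ℝ) : ℂ) = (m : ℂ) + ((∑ j, r j : ℝ) : ℂ) := by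
    rw [Dfun]; simp only [hr]; push_cast; ring
  have hw_pow : w ^ (m - 1) * w = w ^ m := by
    conv_rhs => rw [show m = (m - 1) + 1 by omega]
    rw [pow_succ]
  rw [div_eq_iff hwne, hD]
  linear_combination (-(α * w ^ m)) * hwS + (-(α * (m:ℂ) * P)) * hw_pow

lemma sum_r_nonneg {J : ℕ} {zs : Fin J → ℂ} (hzs : ∀ j, ‖zs j‖ < 1) {w : ℂ} (hw : ‖w‖ = 1) :
    ∀ j : Fin J, 0 < (1 - Complex.normSq (zs j)) / Complex.normSq (w - zs j) := by
  intro j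
  apply div_pos
  · have := hzs j
    have h2 : Complex.normSq (zs j) < 1 := by
      rw [Complex.normSq_eq_norm_sq]
      nlinarith [norm_nonneg (zs j)]
    linarith
  · rw [Complex.normSq_pos]; exact z_ne_a hw (hzs j)

lemma Dfun_gt_one {m J : ℕ} {zs : Fin J → ℂ} (hm : 1 ≤ m) (hdeg : 2 ≤ m + J)
    (hzs : ∀ j, ‖zs j‖ < 1) {w : ℂ} (hw : ‖w‖ = 1) : 1 < Dfun m zs w := by
  rw [Dfun]
  rcases Nat.lt_or_ge m 2 with h2 | h2
  · have hm1 : m = 1 := by omega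
    have hJ : 1 ≤ J := by omega
    have : 0 < ∑ j, (1 - Complex.normSq (zs j)) / Complex.normSq (w - zs j) := by
      apply Finset.sum_pos (fun j _ => sum_r_nonneg hzs hw j)
      exact ⟨⟨0, by omega⟩, Finset.mem_univ _⟩
    rw [hm1]; push_cast; linarith
  · have : 0 ≤ ∑ j, (1 - Complex.normSq (zs j)) / Complex.normSq (w - zs j) :=
      Finset.sum_nonneg (fun j _ => le_of_lt (sum_r_nonneg hzs hw j))
    have : (2:ℝ) ≤ m := by exact_mod_cast h2
    linarith

lemma continuousOn_Dfun {m J : ℕ} {zs : Fin J → ℂ} (hzs : ∀ j, ‖zs j‖ < 1) :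
    ContinuousOn (Dfun m zs) uc := by
  apply ContinuousOn.add continuousOn_const
  apply continuousOn_finset_sum
  intro j _
  apply ContinuousOn.div continuousOn_const
  · exact (Complex.continuous_normSq.comp (continuous_id.sub continuous_const)).continuousOn
  · intro w hw
    simpa [Complex.normSq_eq_zero, sub_eq_zero] using (fun h => z_ne_a hw (hzs j) (by rw [sub_eq_zero]; exact h))

lemma blaschke_mem_uc {α : ℂ} {m J : ℕ} {zs : Fin J → ℂ} (hα : ‖α‖ = 1)
    (hzs : ∀ j, ‖zs j‖ < 1) {w : ℂ} (hw : ‖w‖ = 1) :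
    ‖α * w ^ m * ∏ j, qf (zs j) w‖ = 1 := by
  rw [norm_mul, norm_mul, hα, norm_pow, hw, norm_prod]
  rw [Finset.prod_congr rfl (fun j _ => qf_norm hw (hzs j))]
  simp

lemma exists_lambda_aux {g : ℂ → ℝ} (hg : ContinuousOn g uc) (h1 : ∀ w ∈ uc, 1 < g w) :
    ∃ Λ : ℝ, 1 < Λ ∧ ∀ w ∈ uc, Λ ≤ g w := by
  have huc : uc = Metric.sphere (0:ℂ) 1 := by
    ext z; simp [uc, Metric.mem_sphere, dist_eq_norm]
  have hcomp : IsCompact uc := huc ▸ isCompact_sphere 0 1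
  have hne : uc.Nonempty := ⟨1, by simp [uc]⟩
  obtain ⟨w₀, hw₀, hmin⟩ := hcomp.exists_isMinOn hne hg
  exact ⟨g w₀, h1 w₀ hw₀, fun w hw => hmin hw⟩

/-- The lifting lemma. -/
lemma lift_eq {F : ℝ → ℂ} {ρ : ℝ → ℝ} (hρ : Continuous ρ)
    (hF : ∀ t, HasDerivAt F (2 * Real.pi * Complex.I * F t * (ρ t : ℂ)) t)
    (hFuc : ∀ t, F t ∈ uc) (a : ℝ) (t : ℝ) :
    F t = pc (Complex.arg (F a) / (2 * Real.pi) + ∫ s in a..t, ρ s) := by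
  set h : ℝ → ℝ := fun t => Complex.arg (F a) / (2 * Real.pi) + ∫ s in a..t, ρ s with hh
  have hder : ∀ t, HasDerivAt h (ρ t) t := by
    intro t
    apply HasDerivAt.const_add
    exact intervalIntegral.integral_hasDerivAt_right (hρ.intervalIntegrable a t)
      (hρ.stronglyMeasurableAtFilter volume (𝓝 t)) hρ.continuousAt
  set q : ℝ → ℂ := fun t => F t * Complex.exp (-(2 * Real.pi * Complex.I) * (h t : ℂ)) with hq
  have hqder : ∀ t, HasDerivAt q 0 t := by
    intro t
    have h1 : HasDerivAt (fun t : ℝ => ((h t : ℝ) : ℂ)) ((ρ t : ℂ)) t :=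
      (hder t).ofReal_comp
    have h2 : HasDerivAt (fun t : ℝ => Complex.exp (-(2 * Real.pi * Complex.I) * (h t : ℂ)))
        (Complex.exp (-(2 * Real.pi * Complex.I) * (h t : ℂ)) * (-(2 * Real.pi * Complex.I) * (ρ t : ℂ))) t :=
      (h1.const_mul (-(2 * Real.pi * Complex.I))).cexp
    have := (hF t).mul h2
    refine this.congr_deriv ?_
    ring
  have hconst : ∀ s, q s = q a := by
    intro s
    apply is_const_of_deriv_eq_zero (fun x => (hqder x).differentiableAt)
      (fun x => (hqder x).deriv)
  have hqa : q a = 1 := by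
    have hha : h a = Complex.arg (F a) / (2 * Real.pi) := by
      simp [hh]
    have hpa : pc (h a) = F a := by rw [hha]; exact pc_arg (hFuc a)
    rw [hq]
    simp only
    rw [← hpa, pc, ← Complex.exp_add]
    norm_num
  have := hconst t
  rw [hqa] at this
  simp only [hq, neg_mul] at this
  rw [Complex.exp_neg, ← div_eq_mul_inv, div_eq_one_iff_eq (Complex.exp_ne_zero _)] at this
  exact this

lemma DN_geom {x : ℝ} (h0 : 0 ≤ x) (h1 : x < 1) (M N : ℕ) :
    ∑ k ∈ Finset.Icc M N, x ^ (N - k) ≤ (1 - x)⁻¹ := by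
  classical
  have hinj : ∀ k1 ∈ Finset.Icc M N, ∀ k2 ∈ Finset.Icc M N,
      N - k1 = N - k2 → k1 = k2 := by
    intro k1 hk1 k2 hk2 h
    simp only [Finset.mem_Icc] at hk1 hk2
    omega
  have heq : ∑ k ∈ Finset.Icc M N, x ^ (N - k)
      = ∑ i ∈ (Finset.Icc M N).image (fun k => N - k), x ^ i :=
    (Finset.sum_image hinj).symm
  rw [heq]
  have hsummable : Summable (fun i : ℕ => x ^ i) :=
    summable_geometric_of_lt_one h0 h1
  calc ∑ i ∈ (Finset.Icc M N).image (fun k => N - k), x ^ i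
      ≤ ∑' i : ℕ, x ^ i := hsummable.sum_le_tsum _ (fun i _ => by positivity)
    _ = (1 - x)⁻¹ := tsum_geometric_of_lt_one h0 h1

set_option maxHeartbeats 1000000 in
/-- oscillation control, Donaire–Nicolau Corollary 2.2. -/
theorem oscillation_control (f : ℂ → ℂ) (hf : IsFBPN f) (hf0 : f 0 = 0) :
    ∃ c : ℝ, 0 < c ∧
      ∀ M N : ℕ, 1 ≤ M → M < N → ∀ a : ℕ → ℂ,
        ∀ ξ₀ ∈ uc, ∀ ℓ : ℝ, 0 ≤ ℓ → ∀ δ : ℝ, δ < 1 →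
          mA (f^[N] '' carc ξ₀ ℓ) ≤ δ →
          ∀ ξ ∈ carc ξ₀ ℓ, ∀ ξ' ∈ carc ξ₀ ℓ,
            ‖∑ k ∈ Finset.Icc M N, a k * (f^[k] ξ - f^[k] ξ')‖
              ≤ c * δ * Real.sqrt (∑ n ∈ Finset.Icc M N, ‖a n‖ ^ 2) := by
  classical
  obtain ⟨α, m, J, zs, hα, hm, hdeg, hzs, hfw⟩ := hf
  have hfeq : f = fun w => α * w ^ m * ∏ j, qf (zs j) w := funext fun w => hfw w
  obtain ⟨Λ, hΛ1, hΛle⟩ := exists_lambda_aux (continuousOn_Dfun (m := m) hzs)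
    (fun w hw => Dfun_gt_one hm hdeg hzs hw)
  have hΛ0 : 0 < Λ := by linarith
  set r : ℝ := Λ⁻¹ with hrdef
  have hr0 : 0 < r := inv_pos.mpr hΛ0
  have hr1 : r < 1 := by
    rw [hrdef]
    exact inv_lt_one_of_one_lt₀ hΛ1
  have hr2 : r ^ 2 < 1 := by nlinarith
  have hr2' : (0:ℝ) ≤ r ^ 2 := by positivity
  have h12 : 0 < 1 - r ^ 2 := by linarith
  refine ⟨2 * Real.pi * Real.sqrt ((1 - r ^ 2)⁻¹),
    mul_pos (by positivity) (Real.sqrt_pos.mpr (inv_pos.mpr h12)), ?_⟩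
  -- basic facts about f on the circle
  have hfuc : ∀ w ∈ uc, f w ∈ uc := by
    intro w hw
    rw [hfeq]; exact blaschke_mem_uc hα hzs hw
  have hIter : ∀ (n : ℕ) (w : ℂ), w ∈ uc → f^[n] w ∈ uc := by
    intro n
    induction n with
    | zero => intro w hw; simpa using hw
    | succ n ih => intro w hw; rw [Function.iterate_succ_apply']; exact hfuc _ (ih w hw)
  have hGuc : ∀ (n : ℕ) (t : ℝ), f^[n] (pc t) ∈ uc := fun n t => hIter n _ (pc_mem_uc t)
  set ρ : ℕ → ℝ → ℝ := fun n t => ∏ k ∈ Finset.range n, Dfun m zs (f^[k] (pc t)) with hρdef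
  have hfder : ∀ w ∈ uc, HasDerivAt f (f w * ((Dfun m zs w : ℝ) : ℂ) / w) w := by
    intro w hw
    rw [hfeq]
    exact hasDerivAt_blaschke hm hzs hw
  have hGder : ∀ (n : ℕ) (t : ℝ),
      HasDerivAt (fun t => f^[n] (pc t))
        (2 * Real.pi * Complex.I * f^[n] (pc t) * ((ρ n t : ℝ) : ℂ)) t := by
    intro n
    induction n with
    | zero =>
      intro t
      simpa [hρdef] using hasDerivAt_pc t
    | succ n ih =>
      intro t
      have hw := hGuc n t
      have hcomp := (hfder _ hw).comp t (ih t)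
      have hfe : (fun t : ℝ => f^[n+1] (pc t)) = fun t => f (f^[n] (pc t)) :=
        funext fun t => Function.iterate_succ_apply' f n (pc t)
      rw [hfe, Function.iterate_succ_apply']
      refine hcomp.congr_deriv ?_
      have hwne : f^[n] (pc t) ≠ 0 := by
        intro h; have h2 := hGuc n t; rw [h] at h2; simp [uc] at h2
      rw [hρdef]
      simp only
      rw [Finset.prod_range_succ]
      push_cast
      field_simp
  have hρcont : ∀ n, Continuous (ρ n) := by
    intro n
    rw [hρdef]
    apply continuous_finset_prod
    intro k _
    apply (continuousOn_Dfun hzs).comp_continuous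
    · exact continuous_iff_continuousAt.mpr (fun t => (hGder k t).continuousAt)
    · exact hGuc k
  have hρlb : ∀ n t, Λ ^ n ≤ ρ n t := by
    intro n t
    rw [hρdef]
    calc Λ ^ n = ∏ _k ∈ Finset.range n, Λ := by rw [Finset.prod_const, Finset.card_range]
      _ ≤ _ := Finset.prod_le_prod (fun k _ => le_of_lt hΛ0) (fun k _ => hΛle _ (hGuc k t))
  have hρpos : ∀ n t, 0 < ρ n t := fun n t => lt_of_lt_of_le (pow_pos hΛ0 n) (hρlb n t)
  have hρratio : ∀ (k n : ℕ) (t : ℝ), k ≤ n → Λ ^ (n - k) * ρ k t ≤ ρ n t := by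
    intro k n t hkn
    have hsplit : ρ k t * ∏ i ∈ Finset.Ico k n, Dfun m zs (f^[i] (pc t)) = ρ n t := by
      rw [hρdef]; exact Finset.prod_range_mul_prod_Ico _ hkn
    have hIco : Λ ^ (n - k) ≤ ∏ i ∈ Finset.Ico k n, Dfun m zs (f^[i] (pc t)) := by
      calc Λ ^ (n - k) = ∏ _i ∈ Finset.Ico k n, Λ := by
            rw [Finset.prod_const, Nat.card_Ico]
        _ ≤ _ := Finset.prod_le_prod (fun i _ => le_of_lt hΛ0) (fun i _ => hΛle _ (hGuc i t))
    calc Λ ^ (n - k) * ρ k t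
        ≤ (∏ i ∈ Finset.Ico k n, Dfun m zs (f^[i] (pc t))) * ρ k t :=
          mul_le_mul_of_nonneg_right hIco (le_of_lt (hρpos k t))
      _ = ρ n t := by rw [← hsplit]; ring
  have hlift : ∀ (a0 : ℝ) (n : ℕ) (t : ℝ),
      f^[n] (pc t) = pc (Complex.arg (f^[n] (pc a0)) / (2 * Real.pi) + ∫ s in a0..t, ρ n s) :=
    fun a0 n t => lift_eq (hρcont n) (hGder n) (hGuc n) a0 t
  have hfun_der : ∀ (a0 : ℝ) (n : ℕ) (t : ℝ),
      HasDerivAt (fun t => Complex.arg (f^[n] (pc a0)) / (2 * Real.pi) + ∫ s in a0..t, ρ n s)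
        (ρ n t) t := by
    intro a0 n t
    apply HasDerivAt.const_add
    exact intervalIntegral.integral_hasDerivAt_right ((hρcont n).intervalIntegrable a0 t)
      ((hρcont n).stronglyMeasurableAtFilter volume (𝓝 t)) (hρcont n).continuousAt
  have hfun_mono : ∀ (a0 : ℝ) (n : ℕ),
      StrictMono (fun t => Complex.arg (f^[n] (pc a0)) / (2 * Real.pi) + ∫ s in a0..t, ρ n s) := by
    intro a0 n
    apply strictMono_of_deriv_pos
    intro x
    rw [(hfun_der a0 n x).deriv]
    exact hρpos n x
  intro M N hM hMN aa ξ₀ hξ₀ ℓ hℓ0 δ hδ1 hmAδ ξ hξ ξ' hξ'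
  by_cases hℓ1 : 1 ≤ ℓ
  · exfalso
    have hcarc : carc ξ₀ ℓ = uc := by rw [carc, if_pos hℓ1]
    have himg : f^[N] '' uc = uc := by
      apply Set.Subset.antisymm
      · rintro _ ⟨w, hw, rfl⟩; exact hIter N w hw
      · intro ζ hζ
        set y := Complex.arg ζ / (2 * Real.pi) with hy
        have hpy : pc y = ζ := pc_arg hζ
        set g : ℝ → ℝ := fun t =>
          Complex.arg (f^[N] (pc 0)) / (2 * Real.pi) + ∫ s in (0:ℝ)..t, ρ N s with hgdef
        have hΛN : (0:ℝ) < Λ ^ N := pow_pos hΛ0 N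
        set t₂ : ℝ := max 0 ((y - g 0) / Λ ^ N) with ht₂
        set t₁ : ℝ := min 0 ((y - g 0) / Λ ^ N) with ht₁
        have hgsplit : ∀ t : ℝ, g t = g 0 + ∫ s in (0:ℝ)..t, ρ N s := by
          intro t; rw [hgdef]; simp
        have hint_lb : ∀ t : ℝ, 0 ≤ t → Λ ^ N * t ≤ ∫ s in (0:ℝ)..t, ρ N s := by
          intro t ht
          have := intervalIntegral.integral_mono_on ht
            ((continuous_const (y := Λ ^ N)).intervalIntegrable (μ := volume) 0 t) ((hρcont N).intervalIntegrable 0 t)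
            (fun x _ => hρlb N x)
          simpa [mul_comm] using this
        have hint_ub : ∀ t : ℝ, t ≤ 0 → (∫ s in (0:ℝ)..t, ρ N s) ≤ Λ ^ N * t := by
          intro t ht
          have h1 := intervalIntegral.integral_mono_on ht
            ((continuous_const (y := Λ ^ N)).intervalIntegrable (μ := volume) t 0) ((hρcont N).intervalIntegrable t 0)
            (fun x _ => hρlb N x)
          rw [intervalIntegral.integral_symm]
          simp only [intervalIntegral.integral_const, smul_eq_mul] at h1
          nlinarith [h1]
        have h2 : y ≤ g t₂ := by
          have hub := hint_lb t₂ (le_max_left _ _)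
          have hge : (y - g 0) / Λ ^ N ≤ t₂ := le_max_right _ _
          have h3 : y - g 0 ≤ Λ ^ N * t₂ := by
            rw [div_le_iff₀ hΛN] at hge; linarith
          have h4 := hgsplit t₂
          linarith
        have h1 : g t₁ ≤ y := by
          have hub := hint_ub t₁ (min_le_left _ _)
          have hge : t₁ ≤ (y - g 0) / Λ ^ N := min_le_right _ _
          have h3 : Λ ^ N * t₁ ≤ y - g 0 := by
            rw [le_div_iff₀ hΛN] at hge; linarith
          have h4 := hgsplit t₁
          linarith
        have ht12 : t₁ ≤ t₂ := le_trans (min_le_left _ _) (le_max_left _ _)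
        have hcont : ContinuousOn g (Set.Icc t₁ t₂) :=
          fun x _ => ((hfun_der 0 N x).continuousAt).continuousWithinAt
        obtain ⟨t, _, hgt⟩ := intermediate_value_Icc ht12 hcont ⟨h1, h2⟩
        refine ⟨pc t, pc_mem_uc t, ?_⟩
        rw [hlift 0 N t]
        show pc (g t) = ζ
        rw [hgt, hpy]
    rw [hcarc, himg, mA_uc] at hmAδ
    linarith
  · push_neg at hℓ1
    set a : ℝ := Complex.arg ξ₀ / (2 * Real.pi) - ℓ / 2 with ha
    set b : ℝ := Complex.arg ξ₀ / (2 * Real.pi) + ℓ / 2 with hb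
    have hab : a ≤ b := by rw [ha, hb]; linarith
    have hba : b - a = ℓ := by rw [ha, hb]; ring
    have hI : carc ξ₀ ℓ = pc '' Set.Icc a b := by rw [carc, if_neg (not_le.mpr hℓ1)]
    set g : ℕ → ℝ → ℝ := fun n t =>
      Complex.arg (f^[n] (pc a)) / (2 * Real.pi) + ∫ s in a..t, ρ n s with hgdef
    have hliftg : ∀ n t, f^[n] (pc t) = pc (g n t) := fun n t => hlift a n t
    have hgmono : ∀ n, StrictMono (g n) := fun n => hfun_mono a n
    have hgder : ∀ n t, HasDerivAt (g n) (ρ n t) t := fun n t => hfun_der a n t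
    set L : ℕ → ℝ := fun n => ∫ s in a..b, ρ n s with hLdef
    have hgL : ∀ n, g n b - g n a = L n := by
      intro n; rw [hgdef]; simp [hLdef]
    have hL0 : ∀ n, 0 ≤ L n :=
      fun n => intervalIntegral.integral_nonneg hab (fun x _ => le_of_lt (hρpos n x))
    have himg : ∀ n, f^[n] '' (pc '' Set.Icc a b) = pc '' Set.Icc (g n a) (g n b) := by
      intro n
      rw [Set.image_image]
      have h1 : (fun t => f^[n] (pc t)) '' Set.Icc a b = (fun t => pc (g n t)) '' Set.Icc a b :=
        Set.image_congr (fun t _ => hliftg n t)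
      have h2 : g n '' Set.Icc a b = Set.Icc (g n a) (g n b) := by
        apply Set.Subset.antisymm
        · rintro _ ⟨t, ht, rfl⟩
          exact ⟨(hgmono n).monotone ht.1, (hgmono n).monotone ht.2⟩
        · have hcont : ContinuousOn (g n) (Set.Icc a b) :=
            fun x _ => ((hgder n x).continuousAt).continuousWithinAt
          exact intermediate_value_Icc hab hcont
      rw [h1, ← Set.image_image pc (g n), h2]
    have hgab : ∀ n, g n a ≤ g n b := fun n => (hgmono n).monotone hab
    by_cases hLN : 1 ≤ L N
    · exfalso
      have himgN : f^[N] '' carc ξ₀ ℓ = uc := by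
        rw [hI, himg N]
        apply pc_image_Icc_full
        have := hgL N
        linarith
      rw [himgN, mA_uc] at hmAδ
      linarith
    · push_neg at hLN
      have hmAeq : mA (f^[N] '' carc ξ₀ ℓ) = L N := by
        rw [hI, himg N, mA_pc_image_Icc (hgab N) (by rw [hgL N]; exact hLN)]
        exact hgL N
      have hLNδ : L N ≤ δ := by rw [hmAeq] at hmAδ; exact hmAδ
      have hδ0 : 0 ≤ δ := le_trans (hL0 N) hLNδ
      have hLk : ∀ k, k ≤ N → L k ≤ δ * r ^ (N - k) := by
        intro k hk
        have h1 : Λ ^ (N - k) * L k ≤ L N := by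
          have hmono := intervalIntegral.integral_mono_on hab
            ((continuous_const.mul (hρcont k)).intervalIntegrable (μ := volume) a b)
            ((hρcont N).intervalIntegrable a b)
            (fun x _ => hρratio k N x hk)
          simp only [Pi.mul_apply] at hmono
          rw [intervalIntegral.integral_const_mul] at hmono
          exact hmono
        have hpow : (0:ℝ) < Λ ^ (N - k) := pow_pos hΛ0 _
        have h2 : L k ≤ L N * r ^ (N - k) := by
          rw [hrdef, inv_pow, ← div_eq_mul_inv, le_div_iff₀ hpow]
          nlinarith [h1]
        calc L k ≤ L N * r ^ (N - k) := h2
          _ ≤ δ * r ^ (N - k) := mul_le_mul_of_nonneg_right hLNδ (by positivity)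
      rw [hI] at hξ hξ'
      obtain ⟨s, hs, rfl⟩ := hξ
      obtain ⟨s', hs', rfl⟩ := hξ'
      have hchord : ∀ k, k ≤ N →
          ‖f^[k] (pc s) - f^[k] (pc s')‖ ≤ 2 * Real.pi * (δ * r ^ (N - k)) := by
        intro k hk
        rw [hliftg k s, hliftg k s']
        have h1 := pc_lip (g k s) (g k s')
        have hm1 : g k a ≤ g k s := (hgmono k).monotone hs.1
        have hm2 : g k s ≤ g k b := (hgmono k).monotone hs.2
        have hm3 : g k a ≤ g k s' := (hgmono k).monotone hs'.1
        have hm4 : g k s' ≤ g k b := (hgmono k).monotone hs'.2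
        have h2 : ‖g k s - g k s'‖ ≤ L k := by
          rw [Real.norm_eq_abs, abs_sub_le_iff]
          have := hgL k
          constructor <;> linarith
        calc ‖pc (g k s) - pc (g k s')‖ ≤ 2 * Real.pi * ‖g k s - g k s'‖ := h1
          _ ≤ 2 * Real.pi * L k := by
              apply mul_le_mul_of_nonneg_left h2 (by positivity)
          _ ≤ 2 * Real.pi * (δ * r ^ (N - k)) := by
              apply mul_le_mul_of_nonneg_left (hLk k hk) (by positivity)
      calc ‖∑ k ∈ Finset.Icc M N, aa k * (f^[k] (pc s) - f^[k] (pc s'))‖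
          ≤ ∑ k ∈ Finset.Icc M N, ‖aa k * (f^[k] (pc s) - f^[k] (pc s'))‖ :=
            norm_sum_le _ _
        _ = ∑ k ∈ Finset.Icc M N, ‖aa k‖ * ‖f^[k] (pc s) - f^[k] (pc s')‖ := by
            simp [norm_mul]
        _ ≤ ∑ k ∈ Finset.Icc M N, ‖aa k‖ * (2 * Real.pi * (δ * r ^ (N - k))) := by
            apply Finset.sum_le_sum
            intro k hk
            rw [Finset.mem_Icc] at hk
            exact mul_le_mul_of_nonneg_left (hchord k hk.2) (norm_nonneg _)
        _ ≤ Real.sqrt (∑ k ∈ Finset.Icc M N, ‖aa k‖ ^ 2)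
              * Real.sqrt (∑ k ∈ Finset.Icc M N, (2 * Real.pi * (δ * r ^ (N - k))) ^ 2) :=
            Real.sum_mul_le_sqrt_mul_sqrt _ _ _
        _ ≤ Real.sqrt (∑ k ∈ Finset.Icc M N, ‖aa k‖ ^ 2)
              * ((2 * Real.pi * δ) * Real.sqrt ((1 - r ^ 2)⁻¹)) := by
            apply mul_le_mul_of_nonneg_left ?_ (Real.sqrt_nonneg _)
            have hsum : ∑ k ∈ Finset.Icc M N, (2 * Real.pi * (δ * r ^ (N - k))) ^ 2
                = (2 * Real.pi * δ) ^ 2 * ∑ k ∈ Finset.Icc M N, (r ^ 2) ^ (N - k) := by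
              rw [Finset.mul_sum]
              refine Finset.sum_congr rfl fun k _ => ?_
              have hpp : (r ^ (N - k)) ^ 2 = (r ^ 2) ^ (N - k) := by
                rw [← pow_mul, mul_comm, pow_mul]
              rw [← hpp]; ring
            rw [hsum, Real.sqrt_mul (by positivity), Real.sqrt_sq (by positivity)]
            apply mul_le_mul_of_nonneg_left ?_ (by positivity)
            exact Real.sqrt_le_sqrt (DN_geom hr2' hr2 M N)
        _ = 2 * Real.pi * Real.sqrt ((1 - r ^ 2)⁻¹) * δ
              * Real.sqrt (∑ n ∈ Finset.Icc M N, ‖aa n‖ ^ 2) := by ring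


end
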